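/- If T is a G-Tambara functor such that T(G/H) = 0 for some subgroup H ≤ G, then T(G/K) = 0 for all subgroups K ≤ G. -/

import Mathlib

open CategoryTheory

/-- A (levelled) `G`-Tambara functor: a commutative ring `T(G/H)` for each subgroup
`H ≤ G`, with restriction ring homomorphisms, additive transfers, and multiplicative
norms (preserving `0`) along inclusions of subgroups, together with conjugation
isomorphisms. -/
structure TambaraFunctor.{u_1, u_2} (G : Type u_1) [Group G] [Fintype G] where
  /-- the level `T(G/H)` -/
  obj : Subgroup G → CommRingCat.{u_2}
  /-- restriction maps, which are ring homomorphisms -/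
  res : ∀ ⦃H K : Subgroup G⦄, H ≤ K → (obj K →+* obj H)
  /-- transfer maps, which are additive homomorphisms -/
  tr : ∀ ⦃H K : Subgroup G⦄, H ≤ K → (obj H →+ obj K)
  /-- norm maps, which are multiplicative homomorphisms sending `0` to `0` -/
  nm : ∀ ⦃H K : Subgroup G⦄, H ≤ K → (obj H →*₀ obj K)
  /-- conjugation isomorphisms -/
  conj : ∀ (g : G) (H : Subgroup G),
    obj H ≃+* obj (Subgroup.map (MulAut.conj g).toMonoidHom H)

theorem MonoidWithZeroHom.codomain_subsingleton {M₀ N₀ : Type*} [MulZeroOneClass M₀]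
    [MulZeroOneClass N₀] (f : M₀ →*₀ N₀) [Subsingleton M₀] : Subsingleton N₀ :=
  subsingleton_of_zero_eq_one <| by
    rw [← map_zero f, ← map_one f, Subsingleton.elim (0 : M₀) 1]

namespace TambaraFunctor

variable {G : Type*} [Group G] [Fintype G] (T : TambaraFunctor G)

theorem subsingleton_top_of_subsingleton (H : Subgroup G) [Subsingleton (T.obj H)] :
    Subsingleton (T.obj ⊤) :=
  (T.nm (le_top : H ≤ ⊤)).codomain_subsingleton

theorem subsingleton_of_subsingleton_top [Subsingleton (T.obj ⊤)] (K : Subgroup G) :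
    Subsingleton (T.obj K) :=
  (T.res (le_top : K ≤ ⊤)).codomain_trivial

end TambaraFunctor

/-- If `T(G/H) = 0` for some subgroup `H`, then `T(G/K) = 0` for every subgroup `K`. -/
theorem stmt0 {G : Type*} [Group G] [Fintype G] (T : TambaraFunctor G)
    (H : Subgroup G) (hH : ∀ x y : T.obj H, x = y) :
    ∀ (K : Subgroup G) (x y : T.obj K), x = y := by
  have : Subsingleton (T.obj H) := ⟨hH⟩
  have := T.subsingleton_top_of_subsingleton H
  exact fun K => (T.subsingleton_of_subsingleton_top K).elim
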